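/- In g₂ with the chain h = Δ_θ so(2) = span{(1/√3)(cos θ)Z₁ + (sin θ)Z₂} ⊂ k = so(4) ⊂ g₂: if tan θ ≠ √3, the vectors X = (X₂+Y₂) + (X₄+Y₄) and Y = (−3X₁+Y₁) + (−3X₇+Y₇) satisfy [X,Y] = 0 while [X₂+Y₂, −3X₁+Y₁] = 2(Z₁+3Z₂) has nonzero projection onto m = so(4) ⊖ h; if tan θ = √3, the vectors X = (1/√2)(X₁+Y₁) + X₄ and Y = (1/√2)(−X₂+Y₂) + X₇ satisfy [X,Y] = 0 while the bracket of their k-components, −Z₁−Z₂, has nonzero projection onto m. Hence condition (*) fails for every θ. -/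

import Mathlib

open Matrix

noncomputable section

/-- `E i j = e_{ij} - e_{ji}` in the real `7 × 7` matrices (0-based indices:
`E i j` here corresponds to `E_{(i+1)(j+1)}` in the paper). -/
def E (i j : Fin 7) : Matrix (Fin 7) (Fin 7) ℝ :=
  Matrix.single i j 1 - Matrix.single j i 1

/-- The biinvariant inner product `⟨A,B⟩ = -tr(AB)`. -/
def ip {n : ℕ} (A B : Matrix (Fin n) (Fin n) ℝ) : ℝ := - (A * B).trace

/-- The associated norm. -/
def nrm {n : ℕ} (A : Matrix (Fin n) (Fin n) ℝ) : ℝ := Real.sqrt (ip A A)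

/-- Orthogonal complement with respect to `ip`. -/
def perp {n : ℕ} (W : Submodule ℝ (Matrix (Fin n) (Fin n) ℝ)) :
    Submodule ℝ (Matrix (Fin n) (Fin n) ℝ) where
  carrier := {v | ∀ w ∈ W, ip v w = 0}
  add_mem' := by
    intro a b ha hb w hw
    have h1 := ha w hw
    have h2 := hb w hw
    simp only [ip, Matrix.add_mul, Matrix.trace_add] at *
    linarith
  zero_mem' := by intro w hw; simp [ip]
  smul_mem' := by
    intro c a ha w hw
    have h1 := ha w hw
    have h2 : (a * w).trace = 0 := by simp only [ip] at h1; linarith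
    simp [ip, Matrix.smul_mul, Matrix.trace_smul, h2]

/-- The Lie algebra `so(n)` of skew-symmetric matrices, as a submodule. -/
def so (n : ℕ) : Submodule ℝ (Matrix (Fin n) (Fin n) ℝ) where
  carrier := {A | Aᵀ = -A}
  add_mem' := by
    intro a b ha hb
    simp only [Set.mem_setOf_eq, Matrix.transpose_add] at *
    rw [ha, hb]; abel
  zero_mem' := by simp
  smul_mem' := by
    intro c a ha
    simp only [Set.mem_setOf_eq, Matrix.transpose_smul] at *
    rw [ha, smul_neg]

/-- `P` is the orthogonal projection onto `m` with respect to `ip`. -/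
def IsOrthProj {n : ℕ} (m : Submodule ℝ (Matrix (Fin n) (Fin n) ℝ))
    (P : Matrix (Fin n) (Fin n) ℝ →ₗ[ℝ] Matrix (Fin n) (Fin n) ℝ) : Prop :=
  (∀ v, P v ∈ m) ∧ (∀ v ∈ m, P v = v) ∧ (∀ v, v - P v ∈ perp m)

/-- Condition (*) of Schwachhöfer–Tapp for the decomposition `p = m ⊕ s`, where
`P` is the orthogonal projection onto `m`:  there is `C > 0` with
`‖[Xᵐ,Yᵐ]ᵐ‖ ≤ C‖[X,Y]‖` for all `X, Y ∈ m ⊕ s`. -/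
def CondStar {n : ℕ} (m s : Submodule ℝ (Matrix (Fin n) (Fin n) ℝ))
    (P : Matrix (Fin n) (Fin n) ℝ →ₗ[ℝ] Matrix (Fin n) (Fin n) ℝ) : Prop :=
  ∃ C > 0, ∀ X Y, X ∈ m ⊔ s → Y ∈ m ⊔ s →
    nrm (P ⁅P X, P Y⁆) ≤ C * nrm ⁅X, Y⁆

/-! The explicit basis of `g₂ ⊂ so(7)` from the paper (1-based indices there,
0-based here): `x1 = E₄₆−E₅₇`, `y1 = 2E₁₃+E₄₆+E₅₇`, etc. -/

def x1 : Matrix (Fin 7) (Fin 7) ℝ := E 3 5 - E 4 6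
def y1 : Matrix (Fin 7) (Fin 7) ℝ := (2 : ℝ) • E 0 2 + E 3 5 + E 4 6
def x2 : Matrix (Fin 7) (Fin 7) ℝ := E 3 4 + E 5 6
def y2 : Matrix (Fin 7) (Fin 7) ℝ := (2 : ℝ) • E 1 2 - E 3 4 + E 5 6
def x4 : Matrix (Fin 7) (Fin 7) ℝ := E 0 5 + E 1 4
def y4 : Matrix (Fin 7) (Fin 7) ℝ := (2 : ℝ) • E 2 3 - E 1 4 + E 0 5
def x5 : Matrix (Fin 7) (Fin 7) ℝ := E 0 6 - E 1 3
def y5 : Matrix (Fin 7) (Fin 7) ℝ := (2 : ℝ) • E 2 4 + E 1 3 + E 0 6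
def x6 : Matrix (Fin 7) (Fin 7) ℝ := E 0 3 + E 1 6
def y6 : Matrix (Fin 7) (Fin 7) ℝ := (2 : ℝ) • E 2 5 + E 1 6 - E 0 3
def x7 : Matrix (Fin 7) (Fin 7) ℝ := E 0 4 - E 1 5
def y7 : Matrix (Fin 7) (Fin 7) ℝ := (2 : ℝ) • E 2 6 - E 1 5 - E 0 4
def z1 : Matrix (Fin 7) (Fin 7) ℝ := (2 : ℝ) • E 0 1 - E 3 6 + E 4 5
def z2 : Matrix (Fin 7) (Fin 7) ℝ := E 3 6 + E 4 5

/-- The Lie algebra `g₂` as a subspace of `so(7)`. -/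
def g2alg : Submodule ℝ (Matrix (Fin 7) (Fin 7) ℝ) :=
  Submodule.span ℝ {x1, x2, x4, x5, x6, x7, y1, y2, y4, y5, y6, y7, z1, z2}

/-- The subalgebra `su(3) ⊂ g₂`. -/
def su3g : Submodule ℝ (Matrix (Fin 7) (Fin 7) ℝ) :=
  Submodule.span ℝ {z1, z2, x1, x2, x4, x5, x6, x7}

/-- The subalgebra `so(4) ⊂ g₂`. -/
def so4g : Submodule ℝ (Matrix (Fin 7) (Fin 7) ℝ) :=
  Submodule.span ℝ {x1, x2, z2, y1, y2, z1}


/-! ### Auxiliary infrastructure -/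

abbrev Mz := Matrix (Fin 7) (Fin 7) ℤ
def Ez (i j : Fin 7) : Mz := Matrix.single i j 1 - Matrix.single j i 1
def F : Mz →+* Matrix (Fin 7) (Fin 7) ℝ := (Int.castRingHom ℝ).mapMatrix

lemma F_E (i j : Fin 7) : F (Ez i j) = E i j := by
  ext a b
  simp [F, RingHom.mapMatrix_apply, Matrix.map_apply, E, Ez, Matrix.single,
    Matrix.of_apply]

lemma F_smul (n : ℤ) (A : Mz) : F (n • A) = (n : ℝ) • F A := by
  rw [zsmul_eq_mul, _root_.map_mul F, map_intCast, ← zsmul_eq_mul]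
  exact (Int.cast_smul_eq_zsmul ℝ n (F A)).symm

lemma trace_F (A : Mz) : (F A).trace = ((A.trace : ℤ) : ℝ) := by
  simp [F, RingHom.mapMatrix_apply, Matrix.trace, Matrix.diag, Matrix.map_apply]

lemma ipF (A B : Mz) : ip (F A) (F B) = ((-(A * B).trace : ℤ) : ℝ) := by
  rw [ip, ← _root_.map_mul F, trace_F]; push_cast; ring

def xz1 : Mz := Ez 3 5 - Ez 4 6
def yz1 : Mz := (2 : ℤ) • Ez 0 2 + Ez 3 5 + Ez 4 6
def xz2 : Mz := Ez 3 4 + Ez 5 6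
def yz2 : Mz := (2 : ℤ) • Ez 1 2 - Ez 3 4 + Ez 5 6
def xz4 : Mz := Ez 0 5 + Ez 1 4
def yz4 : Mz := (2 : ℤ) • Ez 2 3 - Ez 1 4 + Ez 0 5
def xz7 : Mz := Ez 0 4 - Ez 1 5
def yz7 : Mz := (2 : ℤ) • Ez 2 6 - Ez 1 5 - Ez 0 4
def zz1 : Mz := (2 : ℤ) • Ez 0 1 - Ez 3 6 + Ez 4 5
def zz2 : Mz := Ez 3 6 + Ez 4 5

lemma Fx1 : F xz1 = x1 := by
  simp only [xz1, x1, map_sub, map_add, F_smul, F_E]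
  try norm_num

lemma Fy1 : F yz1 = y1 := by
  simp only [yz1, y1, map_sub, map_add, F_smul, F_E]
  try norm_num

lemma Fx2 : F xz2 = x2 := by
  simp only [xz2, x2, map_sub, map_add, F_smul, F_E]
  try norm_num

lemma Fy2 : F yz2 = y2 := by
  simp only [yz2, y2, map_sub, map_add, F_smul, F_E]
  try norm_num

lemma Fx4 : F xz4 = x4 := by
  simp only [xz4, x4, map_sub, map_add, F_smul, F_E]
  try norm_num

lemma Fy4 : F yz4 = y4 := by
  simp only [yz4, y4, map_sub, map_add, F_smul, F_E]
  try norm_num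

lemma Fx7 : F xz7 = x7 := by
  simp only [xz7, x7, map_sub, map_add, F_smul, F_E]
  try norm_num

lemma Fy7 : F yz7 = y7 := by
  simp only [yz7, y7, map_sub, map_add, F_smul, F_E]
  try norm_num

lemma Fz1 : F zz1 = z1 := by
  simp only [zz1, z1, map_sub, map_add, F_smul, F_E]
  try norm_num

lemma Fz2 : F zz2 = z2 := by
  simp only [zz2, z2, map_sub, map_add, F_smul, F_E]
  try norm_num


lemma Fc_d : F (xz4 + yz4) = x4 + y4 := by rw [map_add, Fx4, Fy4]
lemma Fc_e : F ((-3 : ℤ) • xz7 + yz7) = -(3 : ℝ) • x7 + y7 := by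
  rw [map_add, F_smul, Fx7, Fy7]; norm_num
lemma Fc_a : F (xz2 + yz2) = x2 + y2 := by rw [map_add, Fx2, Fy2]
lemma Fc_b : F ((-3 : ℤ) • xz1 + yz1) = -(3 : ℝ) • x1 + y1 := by
  rw [map_add, F_smul, Fx1, Fy1]; norm_num
lemma Fc_c : F (xz1 + yz1) = x1 + y1 := by rw [map_add, Fx1, Fy1]
lemma Fc_nb : F (-xz2 + yz2) = -x2 + y2 := by rw [map_add, map_neg, Fx2, Fy2]

/-! ### Bracket identities -/

lemma brBig : (⁅(x2 + y2) + (x4 + y4), (-(3 : ℝ) • x1 + y1) + (-(3 : ℝ) • x7 + y7)⁆ :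
    Matrix (Fin 7) (Fin 7) ℝ) = 0 := by
  rw [Ring.lie_def, ← Fc_a, ← Fc_d, ← Fc_b, ← Fc_e, ← map_add, ← map_add,
    ← _root_.map_mul F, ← _root_.map_mul F, ← map_sub,
    show (xz2 + yz2 + (xz4 + yz4)) * ((-3 : ℤ) • xz1 + yz1 + ((-3 : ℤ) • xz7 + yz7)) -
      ((-3 : ℤ) • xz1 + yz1 + ((-3 : ℤ) • xz7 + yz7)) * (xz2 + yz2 + (xz4 + yz4)) = 0
      from by decide, map_zero]

lemma br2 : (⁅x2 + y2, -(3 : ℝ) • x1 + y1⁆ : Matrix (Fin 7) (Fin 7) ℝ)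
    = (2 : ℝ) • (z1 + (3 : ℝ) • z2) := by
  have e3 : (2 : ℝ) • (z1 + (3 : ℝ) • z2) = F ((2 : ℤ) • (zz1 + (3 : ℤ) • zz2)) := by
    rw [F_smul, map_add, F_smul, Fz1, Fz2]; norm_num
  rw [Ring.lie_def, ← Fc_a, ← Fc_b, e3, ← _root_.map_mul F, ← _root_.map_mul F, ← map_sub]
  congr 1
  decide

lemma brL1 : (⁅x1 + y1, -x2 + y2⁆ : Matrix (Fin 7) (Fin 7) ℝ) = (-2 : ℝ) • (z1 + z2) := by
  have e3 : (-2 : ℝ) • (z1 + z2) = F ((-2 : ℤ) • (zz1 + zz2)) := by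
    rw [F_smul, map_add, Fz1, Fz2]; norm_num
  rw [Ring.lie_def, ← Fc_c, ← Fc_nb, e3, ← _root_.map_mul F, ← _root_.map_mul F, ← map_sub]
  congr 1
  decide

lemma brL2 : (⁅x1 + y1, x7⁆ + ⁅x4, -x2 + y2⁆ : Matrix (Fin 7) (Fin 7) ℝ) = 0 := by
  rw [Ring.lie_def, Ring.lie_def, ← Fc_c, ← Fc_nb, ← Fx7, ← Fx4,
    ← _root_.map_mul F, ← _root_.map_mul F, ← _root_.map_mul F, ← _root_.map_mul F,
    ← map_sub, ← map_sub, ← map_add,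
    show (xz1 + yz1) * xz7 - xz7 * (xz1 + yz1) + (xz4 * (-xz2 + yz2) - (-xz2 + yz2) * xz4) = 0
      from by decide, map_zero]

lemma brL3 : (⁅x4, x7⁆ : Matrix (Fin 7) (Fin 7) ℝ) = z1 + z2 := by
  rw [Ring.lie_def, ← Fx4, ← Fx7, show z1 + z2 = F (zz1 + zz2) from by rw [map_add, Fz1, Fz2],
    ← _root_.map_mul F, ← _root_.map_mul F, ← map_sub]
  congr 1
  decide

/-! ### Inner product values -/

lemma ip_a_z1 : ip (x2 + y2) z1 = 0 := by
  rw [← Fc_a, ← Fz1, ipF,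
    show ((xz2 + yz2) * zz1).trace = 0 from by decide]
  all_goals norm_num

lemma ip_a_z2 : ip (x2 + y2) z2 = 0 := by
  rw [← Fc_a, ← Fz2, ipF,
    show ((xz2 + yz2) * zz2).trace = 0 from by decide]
  all_goals norm_num

lemma ip_b_z1 : ip (-(3 : ℝ) • x1 + y1) z1 = 0 := by
  rw [← Fc_b, ← Fz1, ipF,
    show (((-3 : ℤ) • xz1 + yz1) * zz1).trace = 0 from by decide]
  all_goals norm_num

lemma ip_b_z2 : ip (-(3 : ℝ) • x1 + y1) z2 = 0 := by
  rw [← Fc_b, ← Fz2, ipF,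
    show (((-3 : ℤ) • xz1 + yz1) * zz2).trace = 0 from by decide]
  all_goals norm_num

lemma ip_c_z1 : ip (x1 + y1) z1 = 0 := by
  rw [← Fc_c, ← Fz1, ipF,
    show ((xz1 + yz1) * zz1).trace = 0 from by decide]
  all_goals norm_num

lemma ip_c_z2 : ip (x1 + y1) z2 = 0 := by
  rw [← Fc_c, ← Fz2, ipF,
    show ((xz1 + yz1) * zz2).trace = 0 from by decide]
  all_goals norm_num

lemma ip_d_x1 : ip (x4 + y4) x1 = 0 := by
  rw [← Fc_d, ← Fx1, ipF,
    show ((xz4 + yz4) * xz1).trace = 0 from by decide]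
  all_goals norm_num

lemma ip_d_x2 : ip (x4 + y4) x2 = 0 := by
  rw [← Fc_d, ← Fx2, ipF,
    show ((xz4 + yz4) * xz2).trace = 0 from by decide]
  all_goals norm_num

lemma ip_d_z2 : ip (x4 + y4) z2 = 0 := by
  rw [← Fc_d, ← Fz2, ipF,
    show ((xz4 + yz4) * zz2).trace = 0 from by decide]
  all_goals norm_num

lemma ip_d_y1 : ip (x4 + y4) y1 = 0 := by
  rw [← Fc_d, ← Fy1, ipF,
    show ((xz4 + yz4) * yz1).trace = 0 from by decide]
  all_goals norm_num

lemma ip_d_y2 : ip (x4 + y4) y2 = 0 := by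
  rw [← Fc_d, ← Fy2, ipF,
    show ((xz4 + yz4) * yz2).trace = 0 from by decide]
  all_goals norm_num

lemma ip_d_z1 : ip (x4 + y4) z1 = 0 := by
  rw [← Fc_d, ← Fz1, ipF,
    show ((xz4 + yz4) * zz1).trace = 0 from by decide]
  all_goals norm_num

lemma ip_e_x1 : ip (-(3 : ℝ) • x7 + y7) x1 = 0 := by
  rw [← Fc_e, ← Fx1, ipF,
    show (((-3 : ℤ) • xz7 + yz7) * xz1).trace = 0 from by decide]
  all_goals norm_num

lemma ip_e_x2 : ip (-(3 : ℝ) • x7 + y7) x2 = 0 := by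
  rw [← Fc_e, ← Fx2, ipF,
    show (((-3 : ℤ) • xz7 + yz7) * xz2).trace = 0 from by decide]
  all_goals norm_num

lemma ip_e_z2 : ip (-(3 : ℝ) • x7 + y7) z2 = 0 := by
  rw [← Fc_e, ← Fz2, ipF,
    show (((-3 : ℤ) • xz7 + yz7) * zz2).trace = 0 from by decide]
  all_goals norm_num

lemma ip_e_y1 : ip (-(3 : ℝ) • x7 + y7) y1 = 0 := by
  rw [← Fc_e, ← Fy1, ipF,
    show (((-3 : ℤ) • xz7 + yz7) * yz1).trace = 0 from by decide]
  all_goals norm_num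

lemma ip_e_y2 : ip (-(3 : ℝ) • x7 + y7) y2 = 0 := by
  rw [← Fc_e, ← Fy2, ipF,
    show (((-3 : ℤ) • xz7 + yz7) * yz2).trace = 0 from by decide]
  all_goals norm_num

lemma ip_e_z1 : ip (-(3 : ℝ) • x7 + y7) z1 = 0 := by
  rw [← Fc_e, ← Fz1, ipF,
    show (((-3 : ℤ) • xz7 + yz7) * zz1).trace = 0 from by decide]
  all_goals norm_num

lemma ip_g_x1 : ip (x4) x1 = 0 := by
  rw [← Fx4, ← Fx1, ipF,
    show ((xz4) * xz1).trace = 0 from by decide]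
  all_goals norm_num

lemma ip_g_x2 : ip (x4) x2 = 0 := by
  rw [← Fx4, ← Fx2, ipF,
    show ((xz4) * xz2).trace = 0 from by decide]
  all_goals norm_num

lemma ip_g_z2 : ip (x4) z2 = 0 := by
  rw [← Fx4, ← Fz2, ipF,
    show ((xz4) * zz2).trace = 0 from by decide]
  all_goals norm_num

lemma ip_g_y1 : ip (x4) y1 = 0 := by
  rw [← Fx4, ← Fy1, ipF,
    show ((xz4) * yz1).trace = 0 from by decide]
  all_goals norm_num

lemma ip_g_y2 : ip (x4) y2 = 0 := by
  rw [← Fx4, ← Fy2, ipF,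
    show ((xz4) * yz2).trace = 0 from by decide]
  all_goals norm_num

lemma ip_g_z1 : ip (x4) z1 = 0 := by
  rw [← Fx4, ← Fz1, ipF,
    show ((xz4) * zz1).trace = 0 from by decide]
  all_goals norm_num

lemma ip_h_x1 : ip (x7) x1 = 0 := by
  rw [← Fx7, ← Fx1, ipF,
    show ((xz7) * xz1).trace = 0 from by decide]
  all_goals norm_num

lemma ip_h_x2 : ip (x7) x2 = 0 := by
  rw [← Fx7, ← Fx2, ipF,
    show ((xz7) * xz2).trace = 0 from by decide]
  all_goals norm_num

lemma ip_h_z2 : ip (x7) z2 = 0 := by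
  rw [← Fx7, ← Fz2, ipF,
    show ((xz7) * zz2).trace = 0 from by decide]
  all_goals norm_num

lemma ip_h_y1 : ip (x7) y1 = 0 := by
  rw [← Fx7, ← Fy1, ipF,
    show ((xz7) * yz1).trace = 0 from by decide]
  all_goals norm_num

lemma ip_h_y2 : ip (x7) y2 = 0 := by
  rw [← Fx7, ← Fy2, ipF,
    show ((xz7) * yz2).trace = 0 from by decide]
  all_goals norm_num

lemma ip_h_z1 : ip (x7) z1 = 0 := by
  rw [← Fx7, ← Fz1, ipF,
    show ((xz7) * zz1).trace = 0 from by decide]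
  all_goals norm_num


lemma ip_z1_z1 : ip z1 z1 = 12 := by
  rw [← Fz1, ipF, show (zz1 * zz1).trace = -12 from by decide]
  all_goals norm_num
lemma ip_z2_z2 : ip z2 z2 = 4 := by
  rw [← Fz2, ipF, show (zz2 * zz2).trace = -4 from by decide]
  all_goals norm_num
lemma ip_z1_z2 : ip z1 z2 = 0 := by
  rw [← Fz1, ← Fz2, ipF, show (zz1 * zz2).trace = 0 from by decide]
  all_goals norm_num
lemma ip_z2_z1 : ip z2 z1 = 0 := by
  rw [← Fz2, ← Fz1, ipF, show (zz2 * zz1).trace = 0 from by decide]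
  all_goals norm_num

/-! ### Bilinearity of `ip` -/

lemma ip_add_left {n : ℕ} (A B C : Matrix (Fin n) (Fin n) ℝ) :
    ip (A + B) C = ip A C + ip B C := by simp [ip, add_mul]; ring
lemma ip_smul_left {n : ℕ} (c : ℝ) (A B : Matrix (Fin n) (Fin n) ℝ) :
    ip (c • A) B = c * ip A B := by simp [ip, Matrix.smul_mul]
lemma ip_add_right {n : ℕ} (A B C : Matrix (Fin n) (Fin n) ℝ) :
    ip A (B + C) = ip A B + ip A C := by simp [ip, mul_add]; ring
lemma ip_smul_right {n : ℕ} (c : ℝ) (A B : Matrix (Fin n) (Fin n) ℝ) :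
    ip A (c • B) = c * ip A B := by simp [ip, Matrix.mul_smul]
lemma ip_zero_right {n : ℕ} (A : Matrix (Fin n) (Fin n) ℝ) : ip A 0 = 0 := by simp [ip]
lemma ip_sub_left {n : ℕ} (A B C : Matrix (Fin n) (Fin n) ℝ) :
    ip (A - B) C = ip A C - ip B C := by simp [ip, sub_mul]; ring

lemma ip_z_comb (a b c d : ℝ) :
    ip (a • z1 + b • z2) (c • z1 + d • z2) = 12 * (a * c) + 4 * (b * d) := by
  simp only [ip_add_left, ip_add_right, ip_smul_left, ip_smul_right,
    ip_z1_z1, ip_z2_z2, ip_z1_z2, ip_z2_z1]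
  ring

/-! ### perp and span lemmas -/

lemma mem_perp_span {n : ℕ} {S : Set (Matrix (Fin n) (Fin n) ℝ)}
    {v : Matrix (Fin n) (Fin n) ℝ} (hv : ∀ w ∈ S, ip v w = 0) :
    v ∈ perp (Submodule.span ℝ S) := by
  intro w hw
  induction hw using Submodule.span_induction with
  | mem x hx => exact hv x hx
  | zero => exact ip_zero_right v
  | add a b _ _ ha hb => rw [ip_add_right, ha, hb, add_zero]
  | smul c a _ ha => rw [ip_smul_right, ha, mul_zero]

/-! ### Skewness -/

lemma E_transpose (i j : Fin 7) : (E i j)ᵀ = -(E i j) := by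
  ext a b
  simp only [E, Matrix.transpose_apply, Matrix.sub_apply, Matrix.neg_apply,
    Matrix.single, Matrix.of_apply]
  split_ifs <;> try norm_num
  all_goals tauto

lemma skew_x1 : x1ᵀ = -x1 := by
  rw [x1]
  simp only [Matrix.transpose_sub, Matrix.transpose_add, Matrix.transpose_smul,
    E_transpose]
  module

lemma skew_y1 : y1ᵀ = -y1 := by
  rw [y1]
  simp only [Matrix.transpose_sub, Matrix.transpose_add, Matrix.transpose_smul,
    E_transpose]
  module

lemma skew_x2 : x2ᵀ = -x2 := by
  rw [x2]
  simp only [Matrix.transpose_sub, Matrix.transpose_add, Matrix.transpose_smul,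
    E_transpose]
  module

lemma skew_y2 : y2ᵀ = -y2 := by
  rw [y2]
  simp only [Matrix.transpose_sub, Matrix.transpose_add, Matrix.transpose_smul,
    E_transpose]
  module

lemma skew_x4 : x4ᵀ = -x4 := by
  rw [x4]
  simp only [Matrix.transpose_sub, Matrix.transpose_add, Matrix.transpose_smul,
    E_transpose]
  module

lemma skew_y4 : y4ᵀ = -y4 := by
  rw [y4]
  simp only [Matrix.transpose_sub, Matrix.transpose_add, Matrix.transpose_smul,
    E_transpose]
  module

lemma skew_x7 : x7ᵀ = -x7 := by
  rw [x7]
  simp only [Matrix.transpose_sub, Matrix.transpose_add, Matrix.transpose_smul,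
    E_transpose]
  module

lemma skew_y7 : y7ᵀ = -y7 := by
  rw [y7]
  simp only [Matrix.transpose_sub, Matrix.transpose_add, Matrix.transpose_smul,
    E_transpose]
  module

lemma skew_z1 : z1ᵀ = -z1 := by
  rw [z1]
  simp only [Matrix.transpose_sub, Matrix.transpose_add, Matrix.transpose_smul,
    E_transpose]
  module

lemma skew_z2 : z2ᵀ = -z2 := by
  rw [z2]
  simp only [Matrix.transpose_sub, Matrix.transpose_add, Matrix.transpose_smul,
    E_transpose]
  module


lemma so4g_le_so : so4g ≤ so 7 := by
  rw [so4g, Submodule.span_le]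
  rintro A hA
  simp only [Set.mem_insert_iff, Set.mem_singleton_iff] at hA
  rcases hA with rfl | rfl | rfl | rfl | rfl | rfl
  exacts [skew_x1, skew_x2, skew_z2, skew_y1, skew_y2, skew_z1]

lemma mem_so4g_skew {A : Matrix (Fin 7) (Fin 7) ℝ} (h : A ∈ so4g) : Aᵀ = -A :=
  so4g_le_so h

/-! ### Positivity of the norm -/

lemma ip_self_pos {n : ℕ} {A : Matrix (Fin n) (Fin n) ℝ} (hA : Aᵀ = -A) (h0 : A ≠ 0) :
    0 < ip A A := by
  have hji : ∀ i j, A j i = -A i j := by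
    intro i j
    have := congrFun (congrFun hA i) j
    simpa [Matrix.transpose_apply] using this
  have heq : ip A A = ∑ i, ∑ j, A i j * A i j := by
    rw [ip, Matrix.trace, ← Finset.sum_neg_distrib]
    refine Finset.sum_congr rfl fun i _ => ?_
    rw [Matrix.diag_apply, Matrix.mul_apply, ← Finset.sum_neg_distrib]
    refine Finset.sum_congr rfl fun j _ => ?_
    rw [hji i j]
    ring
  obtain ⟨i, j, hij⟩ : ∃ i j, A i j ≠ 0 := by
    by_contra hc
    push_neg at hc
    exact h0 (by ext i j; simp [hc i j])
  rw [heq]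
  have h2 : (0:ℝ) < ∑ j', A i j' * A i j' :=
    Finset.sum_pos' (fun j' _ => mul_self_nonneg _) ⟨j, Finset.mem_univ j, mul_self_pos.mpr hij⟩
  calc (0:ℝ) < ∑ j', A i j' * A i j' := h2
    _ ≤ ∑ i', ∑ j', A i' j' * A i' j' :=
      Finset.single_le_sum (f := fun i' => ∑ j', A i' j' * A i' j') (fun i' _ => Finset.sum_nonneg fun j' _ => mul_self_nonneg _)
        (Finset.mem_univ i)

lemma nrm_pos {n : ℕ} {A : Matrix (Fin n) (Fin n) ℝ} (hA : Aᵀ = -A) (h0 : A ≠ 0) :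
    0 < nrm A := Real.sqrt_pos.mpr (ip_self_pos hA h0)

lemma nrm_zero' {n : ℕ} : nrm (0 : Matrix (Fin n) (Fin n) ℝ) = 0 := by
  simp [nrm, ip]

/-! ### Projection lemmas -/

lemma P_ne_zero {m : Submodule ℝ (Matrix (Fin 7) (Fin 7) ℝ)}
    {P : Matrix (Fin 7) (Fin 7) ℝ →ₗ[ℝ] Matrix (Fin 7) (Fin 7) ℝ}
    (hP : IsOrthProj m P) {v w : Matrix (Fin 7) (Fin 7) ℝ}
    (hw : w ∈ m) (hvw : ip v w ≠ 0) : P v ≠ 0 := by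
  intro h0
  have h1 := hP.2.2 v w hw
  rw [h0, sub_zero] at h1
  exact hvw h1

lemma P_eq_zero {m : Submodule ℝ (Matrix (Fin 7) (Fin 7) ℝ)}
    {P : Matrix (Fin 7) (Fin 7) ℝ →ₗ[ℝ] Matrix (Fin 7) (Fin 7) ℝ}
    (hP : IsOrthProj m P) (hskew : ∀ A ∈ m, Aᵀ = -A)
    {v : Matrix (Fin 7) (Fin 7) ℝ} (hv : ∀ w ∈ m, ip v w = 0) : P v = 0 := by
  by_contra h0
  have h1 := hP.2.2 v (P v) (hP.1 v)
  rw [ip_sub_left] at h1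
  have h2 := hv (P v) (hP.1 v)
  have h3 : ip (P v) (P v) = 0 := by linarith
  exact absurd h3 (ne_of_gt (ip_self_pos (hskew _ (hP.1 v)) h0))



lemma ip_nb_z1 : ip (-x2 + y2) z1 = 0 := by
  rw [← Fc_nb, ← Fz1, ipF, show ((-xz2 + yz2) * zz1).trace = 0 from by decide]
  all_goals norm_num

lemma ip_nb_z2 : ip (-x2 + y2) z2 = 0 := by
  rw [← Fc_nb, ← Fz2, ipF, show ((-xz2 + yz2) * zz2).trace = 0 from by decide]
  all_goals norm_num

lemma so4g_eq : so4g = Submodule.span ℝ {x1, x2, z2, y1, y2, z1} := rfl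
lemma g2alg_eq : g2alg =
    Submodule.span ℝ {x1, x2, x4, x5, x6, x7, y1, y2, y4, y5, y6, y7, z1, z2} := rfl

lemma mem_perp_so4g {v : Matrix (Fin 7) (Fin 7) ℝ} (h1 : ip v x1 = 0) (h2 : ip v x2 = 0)
    (h3 : ip v z2 = 0) (h4 : ip v y1 = 0) (h5 : ip v y2 = 0) (h6 : ip v z1 = 0) :
    v ∈ perp so4g := by
  rw [so4g_eq]
  apply mem_perp_span
  rintro g hg
  simp only [Set.mem_insert_iff, Set.mem_singleton_iff] at hg
  rcases hg with rfl | rfl | rfl | rfl | rfl | rfl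
  exacts [h1, h2, h3, h4, h5, h6]

lemma half_sqrt2 : (1 / Real.sqrt 2) * (1 / Real.sqrt 2) = 1 / 2 := by
  rw [div_mul_div_comm, one_mul, Real.mul_self_sqrt (by norm_num)]

section

attribute [local instance 100] LieRing.ofAssociativeRing

lemma brS2 : (⁅(1 / Real.sqrt 2) • (x1 + y1), (1 / Real.sqrt 2) • (-x2 + y2)⁆ :
    Matrix (Fin 7) (Fin 7) ℝ) = -z1 - z2 := by
  rw [smul_lie, lie_smul, smul_smul, half_sqrt2, brL1, smul_smul]
  module

lemma brS1 : (⁅(1 / Real.sqrt 2) • (x1 + y1) + x4, (1 / Real.sqrt 2) • (-x2 + y2) + x7⁆ :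
    Matrix (Fin 7) (Fin 7) ℝ) = 0 := by
  have hL2' : (⁅x4, -x2 + y2⁆ : Matrix (Fin 7) (Fin 7) ℝ) = -⁅x1 + y1, x7⁆ :=
    eq_neg_of_add_eq_zero_right brL2
  rw [add_lie, lie_add, lie_add, smul_lie, smul_lie, lie_smul, lie_smul,
    brL1, brL3, hL2', smul_smul, smul_smul, half_sqrt2]
  module

end

/-- In `g₂` with the chain `h = Δ_θ so(2) = span{(1/√3)(cos θ)z₁ + (sin θ)z₂}
⊂ k = so(4) ⊂ g₂`: if `tan θ ≠ √3` the vectors `X = (x₂+y₂) + (x₄+y₄)` and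
`Y = (−3x₁+y₁) + (−3x₇+y₇)` commute while `[x₂+y₂, −3x₁+y₁] = 2(z₁+3z₂)` has
nonzero projection onto `m = so(4) ⊖ h`; if `tan θ = √3` the vectors
`X = (1/√2)(x₁+y₁) + x₄` and `Y = (1/√2)(−x₂+y₂) + x₇` commute while the
bracket of their `k`-components, `−z₁−z₂`, has nonzero projection onto `m`.
Hence condition (*) fails for every `θ`. -/
theorem stmt13 (θ : ℝ)
    (h m s : Submodule ℝ (Matrix (Fin 7) (Fin 7) ℝ))
    (hh : h = Submodule.span ℝ
      {((1 / Real.sqrt 3) * Real.cos θ) • z1 + Real.sin θ • z2})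
    (hm : m = so4g ⊓ perp h) (hs : s = g2alg ⊓ perp so4g)
    (P : Matrix (Fin 7) (Fin 7) ℝ →ₗ[ℝ] Matrix (Fin 7) (Fin 7) ℝ)
    (hP : IsOrthProj m P) :
    (Real.tan θ ≠ Real.sqrt 3 →
      (⁅(x2 + y2) + (x4 + y4), (-(3 : ℝ) • x1 + y1) + (-(3 : ℝ) • x7 + y7)⁆ :
        Matrix (Fin 7) (Fin 7) ℝ) = 0 ∧
      (⁅x2 + y2, -(3 : ℝ) • x1 + y1⁆ : Matrix (Fin 7) (Fin 7) ℝ)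
        = (2 : ℝ) • (z1 + (3 : ℝ) • z2) ∧
      P ((2 : ℝ) • (z1 + (3 : ℝ) • z2)) ≠ 0) ∧
    (Real.tan θ = Real.sqrt 3 →
      (⁅(1 / Real.sqrt 2) • (x1 + y1) + x4, (1 / Real.sqrt 2) • (-x2 + y2) + x7⁆ :
        Matrix (Fin 7) (Fin 7) ℝ) = 0 ∧
      (⁅(1 / Real.sqrt 2) • (x1 + y1), (1 / Real.sqrt 2) • (-x2 + y2)⁆ :
        Matrix (Fin 7) (Fin 7) ℝ) = -z1 - z2 ∧
      P (-z1 - z2) ≠ 0) ∧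
    ¬ CondStar m s P := by
  subst hh hm hs
  have h3 : Real.sqrt 3 * Real.sqrt 3 = 3 := Real.mul_self_sqrt (by norm_num)
  have h3pos : 0 < Real.sqrt 3 := Real.sqrt_pos.mpr (by norm_num)
  -- so4g memberships
  have hx1m : x1 ∈ so4g := by rw [so4g_eq]; exact Submodule.subset_span (by simp)
  have hx2m : x2 ∈ so4g := by rw [so4g_eq]; exact Submodule.subset_span (by simp)
  have hy1m : y1 ∈ so4g := by rw [so4g_eq]; exact Submodule.subset_span (by simp)
  have hy2m : y2 ∈ so4g := by rw [so4g_eq]; exact Submodule.subset_span (by simp)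
  have hz1m : z1 ∈ so4g := by rw [so4g_eq]; exact Submodule.subset_span (by simp)
  have hz2m : z2 ∈ so4g := by rw [so4g_eq]; exact Submodule.subset_span (by simp)
  -- test vector w, in m = so4g ⊓ h^⊥
  have hw_so4g : Real.sin θ • z1 + (-(Real.sqrt 3 * Real.cos θ)) • z2 ∈ so4g :=
    Submodule.add_mem _ (Submodule.smul_mem _ _ hz1m) (Submodule.smul_mem _ _ hz2m)
  have key : 12 * (1 / Real.sqrt 3) = 4 * Real.sqrt 3 := by
    rw [mul_one_div, div_eq_iff (ne_of_gt h3pos)]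
    nlinarith [h3]
  have hw_perp : Real.sin θ • z1 + (-(Real.sqrt 3 * Real.cos θ)) • z2 ∈
      perp (Submodule.span ℝ
        {((1 / Real.sqrt 3) * Real.cos θ) • z1 + Real.sin θ • z2}) := by
    apply mem_perp_span
    rintro x hx
    simp only [Set.mem_singleton_iff] at hx
    subst hx
    rw [ip_z_comb]
    linear_combination Real.sin θ * Real.cos θ * key
  have hw_m : Real.sin θ • z1 + (-(Real.sqrt 3 * Real.cos θ)) • z2 ∈
      so4g ⊓ perp (Submodule.span ℝ
        {((1 / Real.sqrt 3) * Real.cos θ) • z1 + Real.sin θ • z2}) :=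
    Submodule.mem_inf.mpr ⟨hw_so4g, hw_perp⟩
  -- elements of m are skew
  have hm_skew : ∀ A ∈ so4g ⊓ perp (Submodule.span ℝ
      {((1 / Real.sqrt 3) * Real.cos θ) • z1 + Real.sin θ • z2}), Aᵀ = -A :=
    fun A hA => mem_so4g_skew (Submodule.mem_inf.mp hA).1
  -- nonvanishing of the two projections
  have key1 : Real.tan θ ≠ Real.sqrt 3 → P ((2 : ℝ) • (z1 + (3 : ℝ) • z2)) ≠ 0 := by
    intro htan
    refine P_ne_zero hP hw_m ?_
    have hveq : (2 : ℝ) • (z1 + (3 : ℝ) • z2) = (2 : ℝ) • z1 + (6 : ℝ) • z2 := by module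
    rw [hveq, ip_z_comb]
    intro hzero
    have hsc : Real.sin θ = Real.sqrt 3 * Real.cos θ := by nlinarith [hzero]
    have hc : Real.cos θ ≠ 0 := by
      intro hc0
      rw [hc0, mul_zero] at hsc
      have hpy := Real.sin_sq_add_cos_sq θ
      rw [hsc, hc0] at hpy; norm_num at hpy
    exact htan (by rw [Real.tan_eq_sin_div_cos, hsc, mul_div_assoc, div_self hc, mul_one])
  have key2 : Real.tan θ = Real.sqrt 3 → P (-z1 - z2) ≠ 0 := by
    intro htan
    have hc : Real.cos θ ≠ 0 := by
      intro hc0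
      rw [Real.tan_eq_sin_div_cos, hc0, div_zero] at htan
      exact (ne_of_gt h3pos) htan.symm
    have hsc : Real.sin θ = Real.sqrt 3 * Real.cos θ := by
      rw [Real.tan_eq_sin_div_cos] at htan
      exact (div_eq_iff hc).mp htan
    refine P_ne_zero hP hw_m ?_
    have hveq : -z1 - z2 = (-1 : ℝ) • z1 + (-1 : ℝ) • z2 := by module
    rw [hveq, ip_z_comb, hsc]
    intro hzero
    have hne0 : Real.sqrt 3 * Real.cos θ ≠ 0 := mul_ne_zero (ne_of_gt h3pos) hc
    apply hne0
    nlinarith [hzero]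
  refine ⟨fun htan => ⟨brBig, br2, key1 htan⟩, fun htan => ⟨brS1, brS2, key2 htan⟩, ?_⟩
  -- refutation of condition (*)
  rintro ⟨C, hCpos, hineq⟩
  have hPzero : ∀ v : Matrix (Fin 7) (Fin 7) ℝ, v ∈ perp so4g → P v = 0 :=
    fun v hv => P_eq_zero hP hm_skew fun w' hw' => hv w' (Submodule.mem_inf.mp hw').1
  by_cases htan : Real.tan θ = Real.sqrt 3
  · -- X = (1/√2)(x1+y1) + x4, Y = (1/√2)(-x2+y2) + x7
    have ha : (1 / Real.sqrt 2) • (x1 + y1) ∈ so4g ⊓ perp (Submodule.span ℝ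
        {((1 / Real.sqrt 3) * Real.cos θ) • z1 + Real.sin θ • z2}) := by
      refine Submodule.mem_inf.mpr
        ⟨Submodule.smul_mem _ _ (Submodule.add_mem _ hx1m hy1m), ?_⟩
      apply mem_perp_span
      rintro x hx
      simp only [Set.mem_singleton_iff] at hx
      subst hx
      rw [ip_smul_left, ip_add_right, ip_smul_right, ip_smul_right, ip_c_z1, ip_c_z2]
      ring
    have hb : (1 / Real.sqrt 2) • (-x2 + y2) ∈ so4g ⊓ perp (Submodule.span ℝ
        {((1 / Real.sqrt 3) * Real.cos θ) • z1 + Real.sin θ • z2}) := by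
      refine Submodule.mem_inf.mpr ⟨Submodule.smul_mem _ _
        (Submodule.add_mem _ (Submodule.neg_mem _ hx2m) hy2m), ?_⟩
      apply mem_perp_span
      rintro x hx
      simp only [Set.mem_singleton_iff] at hx
      subst hx
      rw [ip_smul_left, ip_add_right, ip_smul_right, ip_smul_right, ip_nb_z1, ip_nb_z2]
      ring
    have hx4s : x4 ∈ g2alg ⊓ perp so4g :=
      Submodule.mem_inf.mpr ⟨by rw [g2alg_eq]; exact Submodule.subset_span (by simp),
        mem_perp_so4g ip_g_x1 ip_g_x2 ip_g_z2 ip_g_y1 ip_g_y2 ip_g_z1⟩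
    have hx7s : x7 ∈ g2alg ⊓ perp so4g :=
      Submodule.mem_inf.mpr ⟨by rw [g2alg_eq]; exact Submodule.subset_span (by simp),
        mem_perp_so4g ip_h_x1 ip_h_x2 ip_h_z2 ip_h_y1 ip_h_y2 ip_h_z1⟩
    have hXmem : (1 / Real.sqrt 2) • (x1 + y1) + x4 ∈
        (so4g ⊓ perp (Submodule.span ℝ
          {((1 / Real.sqrt 3) * Real.cos θ) • z1 + Real.sin θ • z2})) ⊔
        (g2alg ⊓ perp so4g) :=
      Submodule.mem_sup.mpr ⟨_, ha, _, hx4s, rfl⟩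
    have hYmem : (1 / Real.sqrt 2) • (-x2 + y2) + x7 ∈
        (so4g ⊓ perp (Submodule.span ℝ
          {((1 / Real.sqrt 3) * Real.cos θ) • z1 + Real.sin θ • z2})) ⊔
        (g2alg ⊓ perp so4g) :=
      Submodule.mem_sup.mpr ⟨_, hb, _, hx7s, rfl⟩
    have h1 := hineq _ _ hXmem hYmem
    have hPX : P ((1 / Real.sqrt 2) • (x1 + y1) + x4) = (1 / Real.sqrt 2) • (x1 + y1) := by
      rw [map_add, hP.2.1 _ ha,
        hPzero x4 (mem_perp_so4g ip_g_x1 ip_g_x2 ip_g_z2 ip_g_y1 ip_g_y2 ip_g_z1), add_zero]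
    have hPY : P ((1 / Real.sqrt 2) • (-x2 + y2) + x7) = (1 / Real.sqrt 2) • (-x2 + y2) := by
      rw [map_add, hP.2.1 _ hb,
        hPzero x7 (mem_perp_so4g ip_h_x1 ip_h_x2 ip_h_z2 ip_h_y1 ip_h_y2 ip_h_z1), add_zero]
    rw [hPX, hPY, brS2, brS1, nrm_zero', mul_zero] at h1
    have hpos : 0 < nrm (P (-z1 - z2)) :=
      nrm_pos (hm_skew _ (hP.1 (-z1 - z2))) (key2 htan)
    linarith
  · -- X = (x2+y2) + (x4+y4), Y = (-3x1+y1) + (-3x7+y7)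
    have ha : x2 + y2 ∈ so4g ⊓ perp (Submodule.span ℝ
        {((1 / Real.sqrt 3) * Real.cos θ) • z1 + Real.sin θ • z2}) := by
      refine Submodule.mem_inf.mpr ⟨Submodule.add_mem _ hx2m hy2m, ?_⟩
      apply mem_perp_span
      rintro x hx
      simp only [Set.mem_singleton_iff] at hx
      subst hx
      rw [ip_add_right, ip_smul_right, ip_smul_right, ip_a_z1, ip_a_z2]
      ring
    have hb : -(3 : ℝ) • x1 + y1 ∈ so4g ⊓ perp (Submodule.span ℝ
        {((1 / Real.sqrt 3) * Real.cos θ) • z1 + Real.sin θ • z2}) := by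
      refine Submodule.mem_inf.mpr
        ⟨Submodule.add_mem _ (Submodule.smul_mem _ _ hx1m) hy1m, ?_⟩
      apply mem_perp_span
      rintro x hx
      simp only [Set.mem_singleton_iff] at hx
      subst hx
      rw [ip_add_right, ip_smul_right, ip_smul_right, ip_b_z1, ip_b_z2]
      ring
    have hds : x4 + y4 ∈ g2alg ⊓ perp so4g :=
      Submodule.mem_inf.mpr ⟨by
        rw [g2alg_eq]
        exact Submodule.add_mem _ (Submodule.subset_span (by simp))
          (Submodule.subset_span (by simp)),
        mem_perp_so4g ip_d_x1 ip_d_x2 ip_d_z2 ip_d_y1 ip_d_y2 ip_d_z1⟩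
    have hes : -(3 : ℝ) • x7 + y7 ∈ g2alg ⊓ perp so4g :=
      Submodule.mem_inf.mpr ⟨by
        rw [g2alg_eq]
        exact Submodule.add_mem _ (Submodule.smul_mem _ _ (Submodule.subset_span (by simp)))
          (Submodule.subset_span (by simp)),
        mem_perp_so4g ip_e_x1 ip_e_x2 ip_e_z2 ip_e_y1 ip_e_y2 ip_e_z1⟩
    have hXmem : (x2 + y2) + (x4 + y4) ∈
        (so4g ⊓ perp (Submodule.span ℝ
          {((1 / Real.sqrt 3) * Real.cos θ) • z1 + Real.sin θ • z2})) ⊔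
        (g2alg ⊓ perp so4g) :=
      Submodule.mem_sup.mpr ⟨_, ha, _, hds, rfl⟩
    have hYmem : (-(3 : ℝ) • x1 + y1) + (-(3 : ℝ) • x7 + y7) ∈
        (so4g ⊓ perp (Submodule.span ℝ
          {((1 / Real.sqrt 3) * Real.cos θ) • z1 + Real.sin θ • z2})) ⊔
        (g2alg ⊓ perp so4g) :=
      Submodule.mem_sup.mpr ⟨_, hb, _, hes, rfl⟩
    have h1 := hineq _ _ hXmem hYmem
    have hPX : P ((x2 + y2) + (x4 + y4)) = x2 + y2 := by
      rw [map_add, hP.2.1 _ ha,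
        hPzero (x4 + y4) (mem_perp_so4g ip_d_x1 ip_d_x2 ip_d_z2 ip_d_y1 ip_d_y2 ip_d_z1),
        add_zero]
    have hPY : P ((-(3 : ℝ) • x1 + y1) + (-(3 : ℝ) • x7 + y7)) = -(3 : ℝ) • x1 + y1 := by
      rw [map_add, hP.2.1 _ hb,
        hPzero (-(3 : ℝ) • x7 + y7)
          (mem_perp_so4g ip_e_x1 ip_e_x2 ip_e_z2 ip_e_y1 ip_e_y2 ip_e_z1),
        add_zero]
    rw [hPX, hPY, br2, brBig, nrm_zero', mul_zero] at h1
    have hpos : 0 < nrm (P ((2 : ℝ) • (z1 + (3 : ℝ) • z2))) :=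
      nrm_pos (hm_skew _ (hP.1 _)) (key1 htan)
    linarith
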